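/- Let δ > 0, λ > 0, σ ≥ 0, let ω be a continuity modulus, and assume 4δ²μ₁ ≥ [λ^{1−2σ}ω(1/λ)]² + 2δ[λ^{1−2σ}ω(1/λ)]. Let c be ω-continuous with μ₁ ≤ c(t) ≤ μ₂ and let u solve u'' + 2δλ^{2σ}u' + λ²c(t)u = 0 with u(0)=u₀, u'(0)=u₁. Then |u'(t)|² + 2λ²μ₁|u(t)|² ≤ 4u₁² + 2(3δ²λ^{4σ} + λ²μ₂)u₀² for all t ≥ 0. -/

import Mathlib

/-!
Average `c` over windows of length `ε = 1/λ` (after extending it constantly to negative times):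
the average `c_ε` stays in `[μ₁, μ₂]`, is within `ω(1/λ)` of `c`, and is differentiable with
`|c_ε'| ≤ λ ω(1/λ)`. With `a = δλ^{2σ}`, the energy `(u' + au)² + a²u² + λ²c_ε u²` has as
derivative, along solutions, a quadratic form in `(u, u')` whose nonpositivity is exactly the
hypothesis on `δ, μ₁, ω`. So the energy decreases; it is at least `u'²/2 + λ²μ₁u²`, and at
`t = 0` at most `2u₁² + (3a² + λ²μ₂)u₀²`.
-/

open Real MeasureTheory Set Filter Topology

section Modulus

theorem continuous_of_abs_sub_le_modulus {f ω : ℝ → ℝ} (hω : Tendsto ω (𝓝 0) (𝓝 0))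
    (hf : ∀ s t, |f s - f t| ≤ ω |s - t|) : Continuous f := by
  refine continuous_iff_continuousAt.2 fun t ↦ tendsto_iff_dist_tendsto_zero.2 ?_
  have hlim : Tendsto (fun s ↦ ω |s - t|) (𝓝 t) (𝓝 0) :=
    hω.comp <| (continuous_id.sub continuous_const).abs.tendsto' t 0 (by simp)
  exact squeeze_zero (fun _ ↦ dist_nonneg) (fun s ↦ (Real.dist_eq _ _).trans_le (hf s t)) hlim

theorem abs_comp_max_sub_le_modulus {f ω : ℝ → ℝ} (hω : Monotone ω)
    (hf : ∀ a ≥ (0:ℝ), ∀ b ≥ (0:ℝ), |f a - f b| ≤ ω |a - b|) (s t : ℝ) :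
    |f (max s 0) - f (max t 0)| ≤ ω |s - t| :=
  (hf _ (le_max_right _ _) _ (le_max_right _ _)).trans (hω (abs_max_sub_max_le_abs _ _ _))

end Modulus

section MovingAverage

noncomputable def movingAverage (f : ℝ → ℝ) (ε t : ℝ) : ℝ := ε⁻¹ * ∫ s in t..t + ε, f s

variable {f : ℝ → ℝ} {ε : ℝ}

theorem hasDerivAt_movingAverage (hf : Continuous f) (t : ℝ) :
    HasDerivAt (movingAverage f ε) (ε⁻¹ * (f (t + ε) - f t)) t := by
  have hF := fun x ↦ (hf.integral_hasStrictDerivAt 0 x).hasDerivAt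
  have hshift : HasDerivAt (fun x ↦ ∫ s in (0:ℝ)..x + ε, f s) (f (t + ε)) t :=
    (hF (t + ε)).comp_add_const t ε
  refine ((hshift.sub (hF t)).const_mul ε⁻¹).congr_of_eventuallyEq (.of_forall fun x ↦ ?_)
  simp only [movingAverage, Pi.sub_apply]
  rw [intervalIntegral.integral_interval_sub_left (hf.intervalIntegrable _ _)
    (hf.intervalIntegrable _ _)]

theorem movingAverage_mem_Icc {t m M : ℝ} (hf : IntervalIntegrable f volume t (t + ε))
    (hε : 0 < ε) (hbound : ∀ s ∈ Icc t (t + ε), f s ∈ Icc m M) :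
    movingAverage f ε t ∈ Icc m M := by
  have hle : t ≤ t + ε := by linarith
  have hlow := intervalIntegral.integral_mono_on hle intervalIntegrable_const hf
    fun s hs ↦ (hbound s hs).1
  have hup := intervalIntegral.integral_mono_on hle hf intervalIntegrable_const
    fun s hs ↦ (hbound s hs).2
  simp only [intervalIntegral.integral_const, add_sub_cancel_left, smul_eq_mul] at hlow hup
  rw [movingAverage, mem_Icc, le_inv_mul_iff₀ hε, inv_mul_le_iff₀ hε]
  exact ⟨hlow, hup⟩

theorem abs_movingAverage_sub_le {t W : ℝ} (hf : IntervalIntegrable f volume t (t + ε))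
    (hε : 0 < ε) (hbound : ∀ s ∈ Icc t (t + ε), |f s - f t| ≤ W) :
    |movingAverage f ε t - f t| ≤ W := by
  have := movingAverage_mem_Icc (m := f t - W) (M := f t + W) hf hε fun s hs ↦ by
    have := abs_le.1 (hbound s hs); constructor <;> linarith
  rw [abs_le]; constructor <;> linarith [this.1, this.2]

theorem exists_regularization_of_modulus {c ω : ℝ → ℝ} {μ₁ μ₂ ε : ℝ} (hε : 0 < ε)
    (hω_lim : Tendsto ω (𝓝 0) (𝓝 0)) (hω_mono : Monotone ω)
    (hc_bound : ∀ t ≥ (0:ℝ), μ₁ ≤ c t ∧ c t ≤ μ₂)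
    (hc_ω : ∀ a ≥ (0:ℝ), ∀ b ≥ (0:ℝ), |c a - c b| ≤ ω |a - b|) :
    ∃ g g' : ℝ → ℝ, (∀ t, HasDerivAt g (g' t) t) ∧ (∀ t, μ₁ ≤ g t ∧ g t ≤ μ₂) ∧
      (∀ t ≥ (0:ℝ), |g t - c t| ≤ ω ε) ∧ (∀ t, |g' t| ≤ ε⁻¹ * ω ε) := by
  set C : ℝ → ℝ := fun t ↦ c (max t 0)
  have hCω : ∀ s t, |C s - C t| ≤ ω |s - t| := abs_comp_max_sub_le_modulus hω_mono hc_ω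
  have hC : Continuous C := continuous_of_abs_sub_le_modulus hω_lim hCω
  have hCω_near : ∀ t, ∀ s ∈ Icc t (t + ε), |C s - C t| ≤ ω ε := fun t s hs ↦
    (hCω s t).trans <| hω_mono <| by
      rw [abs_of_nonneg (by linarith [hs.1])]; linarith [hs.2]
  refine ⟨movingAverage C ε, fun t ↦ ε⁻¹ * (C (t + ε) - C t),
    hasDerivAt_movingAverage hC, fun t ↦ movingAverage_mem_Icc (hC.intervalIntegrable _ _) hε
      fun s _ ↦ hc_bound _ (le_max_right _ _), fun t ht ↦ ?_, fun t ↦ ?_⟩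
  · have := abs_movingAverage_sub_le (hC.intervalIntegrable _ _) hε (hCω_near t)
    rwa [show C t = c t by simp [C, ht]] at this
  · rw [abs_mul, abs_of_pos (inv_pos.2 hε)]
    exact mul_le_mul_of_nonneg_left (hCω_near t _ ⟨by linarith, le_rfl⟩) (inv_pos.2 hε).le

end MovingAverage

section DampedEnergy

def dampedEnergy (a K x y : ℝ) : ℝ := (y + a * x) ^ 2 + a ^ 2 * x ^ 2 + K * x ^ 2

variable {a K k x y : ℝ}

theorem half_sq_add_le_dampedEnergy (hk : k ≤ K) :
    y ^ 2 / 2 + k * x ^ 2 ≤ dampedEnergy a K x y := by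
  have : k * x ^ 2 ≤ K * x ^ 2 := mul_le_mul_of_nonneg_right hk (sq_nonneg x)
  unfold dampedEnergy
  nlinarith [sq_nonneg (y + 2 * a * x)]

theorem dampedEnergy_le (hK : K ≤ k) :
    dampedEnergy a K x y ≤ 2 * y ^ 2 + (3 * a ^ 2 + k) * x ^ 2 := by
  have : K * x ^ 2 ≤ k * x ^ 2 := mul_le_mul_of_nonneg_right hK (sq_nonneg x)
  unfold dampedEnergy
  nlinarith [sq_nonneg (y - a * x)]

theorem dissipation_nonpos {l p μ D E : ℝ} (ha : 0 < a) (hD : |D| ≤ l * p) (hE : |E| ≤ l ^ 2 * p)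
    (hk : l ^ 2 * μ ≤ k) (hp : p ^ 2 + 2 * a * p ≤ 4 * a ^ 2 * μ) :
    -2 * a * y ^ 2 + 2 * D * x * y + (E - 2 * a * k) * x ^ 2 ≤ 0 := by
  have hDxy : D * (x * y) ≤ l * p * (|x| * |y|) :=
    calc D * (x * y) ≤ |D| * (|x| * |y|) := by rw [← abs_mul, ← abs_mul]; exact le_abs_self _
      _ ≤ l * p * (|x| * |y|) := by gcongr
  have hEx : E * x ^ 2 ≤ l ^ 2 * p * x ^ 2 :=
    mul_le_mul_of_nonneg_right (le_of_abs_le hE) (sq_nonneg x)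
  have hkx : 2 * a * (l ^ 2 * μ * x ^ 2) ≤ 2 * a * (k * x ^ 2) :=
    mul_le_mul_of_nonneg_left (mul_le_mul_of_nonneg_right hk (sq_nonneg x)) (by positivity)
  have hdisc : l ^ 2 * x ^ 2 * (p ^ 2 + 2 * a * p - 4 * a ^ 2 * μ) ≤ 0 :=
    mul_nonpos_of_nonneg_of_nonpos (by positivity) (by linarith)
  have hsq : 2 * a * (-2 * a * |y| ^ 2 + 2 * (l * p) * (|x| * |y|)
      + (l ^ 2 * p - 2 * a * l ^ 2 * μ) * |x| ^ 2)
      = -(2 * a * |y| - l * p * |x|) ^ 2 + l ^ 2 * |x| ^ 2 * (p ^ 2 + 2 * a * p - 4 * a ^ 2 * μ) := by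
    ring
  rw [sq_abs, sq_abs] at hsq
  nlinarith [sq_nonneg (2 * a * |y| - l * p * |x|)]

end DampedEnergy

section DampedOscillator

variable {u u' u'' K K' k : ℝ → ℝ} {a : ℝ}

theorem hasDerivAt_dampedEnergy {t : ℝ} (hu : HasDerivAt u (u' t) t)
    (hu' : HasDerivAt u' (u'' t) t) (hK : HasDerivAt K (K' t) t) :
    HasDerivAt (fun t ↦ dampedEnergy a (K t) (u t) (u' t))
      (2 * (u' t + a * u t) * (u'' t + a * u' t) + 2 * a ^ 2 * u t * u' t
        + K' t * u t ^ 2 + 2 * K t * u t * u' t) t := by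
  have := (((hu'.add (hu.const_mul a)).pow 2).add ((hu.pow 2).const_mul (a ^ 2))).add
    (hK.mul (hu.pow 2))
  refine this.congr_deriv ?_
  simp only [Pi.add_apply, Pi.pow_apply]
  ring

theorem dampedEnergy_antitoneOn {l p μ : ℝ} (ha : 0 < a) (hu : ∀ t, HasDerivAt u (u' t) t)
    (hu' : ∀ t, HasDerivAt u' (u'' t) t) (hK : ∀ t, HasDerivAt K (K' t) t)
    (hode : ∀ t ≥ (0:ℝ), u'' t + 2 * a * u' t + k t * u t = 0)
    (hKk : ∀ t ≥ (0:ℝ), |K t - k t| ≤ l * p) (hK' : ∀ t ≥ (0:ℝ), |K' t| ≤ l ^ 2 * p)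
    (hk : ∀ t ≥ (0:ℝ), l ^ 2 * μ ≤ k t) (hp : p ^ 2 + 2 * a * p ≤ 4 * a ^ 2 * μ) :
    AntitoneOn (fun t ↦ dampedEnergy a (K t) (u t) (u' t)) (Ici 0) := by
  have hE := fun t ↦ hasDerivAt_dampedEnergy (a := a) (hu t) (hu' t) (hK t)
  refine antitoneOn_of_hasDerivWithinAt_nonpos (convex_Ici 0)
    (continuous_iff_continuousAt.2 fun t ↦ (hE t).continuousAt).continuousOn
    (fun t _ ↦ (hE t).hasDerivWithinAt)
    fun t ht ↦ ?_
  rw [interior_Ici, mem_Ioi] at ht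
  have hu''t : u'' t = -(2 * a * u' t + k t * u t) := by linarith [hode t ht.le]
  calc _ = -2 * a * u' t ^ 2 + 2 * (K t - k t) * u t * u' t
        + (K' t - 2 * a * k t) * u t ^ 2 := by rw [hu''t]; ring
    _ ≤ 0 := dissipation_nonpos ha (hKk t ht.le) (hK' t ht.le) (hk t ht.le) hp

end DampedOscillator

theorem stmt9_general (δ l σ μ₁ μ₂ : ℝ) (hδ : 0 < δ) (hl : 0 < l)
    (ω : ℝ → ℝ) (hω_cont : Continuous ω) (hω0 : ω 0 = 0)
    (hω_mono : Monotone ω)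
    (hmain : 4 * δ ^ 2 * μ₁ ≥
      (l ^ (1 - 2*σ) * ω (1/l)) ^ 2 + 2 * δ * (l ^ (1 - 2*σ) * ω (1/l)))
    (c : ℝ → ℝ)
    (hc_bound : ∀ t ≥ (0:ℝ), μ₁ ≤ c t ∧ c t ≤ μ₂)
    (hc_ω : ∀ a ≥ (0:ℝ), ∀ b ≥ (0:ℝ), |c a - c b| ≤ ω |a - b|)
    (u u' u'' : ℝ → ℝ)
    (hu : ∀ t, HasDerivAt u (u' t) t) (hu' : ∀ t, HasDerivAt u' (u'' t) t)
    (hode : ∀ t ≥ (0:ℝ), u'' t + 2 * δ * l ^ (2*σ) * u' t + l ^ 2 * c t * u t = 0)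
    (u₀ u₁ : ℝ) (h0 : u 0 = u₀) (h1 : u' 0 = u₁) :
    ∀ t ≥ (0:ℝ),
      (u' t) ^ 2 + 2 * l ^ 2 * μ₁ * (u t) ^ 2 ≤
        4 * u₁ ^ 2 + 2 * (3 * δ ^ 2 * l ^ (4*σ) + l ^ 2 * μ₂) * u₀ ^ 2 := by
  intro t ht
  subst h0 h1
  set a := δ * l ^ (2*σ)
  set p := l * ω (1/l)
  have hp : p ^ 2 + 2 * a * p ≤ 4 * a ^ 2 * μ₁ := by
    have hpP : p = l ^ (1 - 2*σ) * ω (1/l) * l ^ (2*σ) := by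
      rw [mul_right_comm, ← rpow_add hl, sub_add_cancel, rpow_one]
    have := mul_le_mul_of_nonneg_left hmain (sq_nonneg (l ^ (2*σ)))
    rw [hpP]; linarith
  obtain ⟨g, g', hg, hg_bound, hgc, hg'⟩ := exists_regularization_of_modulus (ε := 1/l)
    (by positivity) (hω_cont.tendsto' 0 0 hω0) hω_mono hc_bound hc_ω
  have hE := dampedEnergy_antitoneOn (K := fun t ↦ l ^ 2 * g t) (K' := fun t ↦ l ^ 2 * g' t)
    (k := fun t ↦ l ^ 2 * c t) (l := l) (p := p) (by positivity) hu hu'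
    (fun t ↦ (hg t).const_mul _) (fun t ht ↦ by linarith [hode t ht])
    (fun t ht ↦ by
      rw [← mul_sub, abs_mul, abs_sq]
      exact (mul_le_mul_of_nonneg_left (hgc t ht) (sq_nonneg l)).trans_eq (by ring))
    (fun t _ ↦ by
      rw [abs_mul, abs_sq]
      exact mul_le_mul_of_nonneg_left ((hg' t).trans_eq (by rw [inv_div, div_one]))
        (sq_nonneg l))
    (fun t ht ↦ mul_le_mul_of_nonneg_left (hc_bound t ht).1 (sq_nonneg l)) hp
  have hlow := half_sq_add_le_dampedEnergy (a := a) (x := u t) (y := u' t)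
    (mul_le_mul_of_nonneg_left (hg_bound t).1 (sq_nonneg l))
  have hup := dampedEnergy_le (a := a) (x := u 0) (y := u' 0)
    (mul_le_mul_of_nonneg_left (hg_bound 0).2 (sq_nonneg l))
  have ha2 : a ^ 2 = δ ^ 2 * l ^ (4*σ) := by
    rw [show 4*σ = 2*σ + 2*σ by ring, rpow_add hl]; ring
  rw [ha2] at hup
  linarith [hE self_mem_Ici ht ht]

theorem stmt9 (δ l σ μ₁ μ₂ : ℝ) (hδ : 0 < δ) (hl : 0 < l) (hσ : 0 ≤ σ)
    (ω : ℝ → ℝ) (hω_cont : Continuous ω) (hω0 : ω 0 = 0)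
    (hω_pos : ∀ x > (0:ℝ), 0 < ω x) (hω_mono : Monotone ω)
    (hω_mono2 : ∀ x y : ℝ, 0 < x → x ≤ y → x / ω x ≤ y / ω y)
    (hmain : 4 * δ ^ 2 * μ₁ ≥
      (l ^ (1 - 2*σ) * ω (1/l)) ^ 2 + 2 * δ * (l ^ (1 - 2*σ) * ω (1/l)))
    (c : ℝ → ℝ)
    (hc_bound : ∀ t ≥ (0:ℝ), μ₁ ≤ c t ∧ c t ≤ μ₂)
    (hc_ω : ∀ a ≥ (0:ℝ), ∀ b ≥ (0:ℝ), |c a - c b| ≤ ω |a - b|)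
    (u u' u'' : ℝ → ℝ)
    (hu : ∀ t, HasDerivAt u (u' t) t) (hu' : ∀ t, HasDerivAt u' (u'' t) t)
    (hode : ∀ t ≥ (0:ℝ), u'' t + 2 * δ * l ^ (2*σ) * u' t + l ^ 2 * c t * u t = 0)
    (u₀ u₁ : ℝ) (h0 : u 0 = u₀) (h1 : u' 0 = u₁) :
    ∀ t ≥ (0:ℝ),
      (u' t) ^ 2 + 2 * l ^ 2 * μ₁ * (u t) ^ 2 ≤
        4 * u₁ ^ 2 + 2 * (3 * δ ^ 2 * l ^ (4*σ) + l ^ 2 * μ₂) * u₀ ^ 2 :=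
  stmt9_general δ l σ μ₁ μ₂ hδ hl ω hω_cont hω0 hω_mono hmain c hc_bound hc_ω u u' u'' hu hu' hode
    u₀ u₁ h0 h1
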